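/- Let f(z) = (z^k + a)/(1 + conj(a)·z^k) with 0 < |a| < 1, k ≥ 2, and suppose a/|a| is a (k−1)-th root of unity. Then f'(a/|a|) = 1 (i.e., a/|a| is a parabolic fixed point) if and only if |a| = (k−1)/(k+1). -/

import Mathlib

open Complex

theorem stmt_3 (a : ℂ) (ha0 : 0 < ‖a‖) (ha1 : ‖a‖ < 1)
    (k : ℕ) (hk : 2 ≤ k)
    (hroot : (a / ‖a‖) ^ (k - 1) = 1) :
    deriv (fun z : ℂ => (z ^ k + a) / (1 + (starRingEnd ℂ) a * z ^ k))
        (a / ‖a‖) = 1 ↔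
      ‖a‖ = ((k : ℝ) - 1) / ((k : ℝ) + 1) := by
  set r : ℝ := ‖a‖ with hr
  set w : ℂ := a / (r : ℂ) with hwdef
  have hr0 : (r : ℂ) ≠ 0 := by
    exact_mod_cast ne_of_gt ha0
  have hconj_a : (starRingEnd ℂ) a * a = ((r^2 : ℝ) : ℂ) := by
    rw [mul_comm, Complex.mul_conj, Complex.normSq_eq_norm_sq]
  have haw : (starRingEnd ℂ) a * w = (r : ℂ) := by
    rw [hwdef, mul_div_assoc']
    rw [hconj_a]
    push_cast
    field_simp
  have hwk1 : w ^ (k - 1) = 1 := hroot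
  have hwk : w ^ k = w := by
    have : k = (k - 1) + 1 := by omega
    rw [this, pow_succ, hwk1, one_mul]
  have hden : 1 + (starRingEnd ℂ) a * w ^ k = 1 + (r : ℂ) := by
    rw [hwk, haw]
  have hrpos : (0:ℝ) < 1 + r := by linarith
  have h1rc : ((1 : ℂ) + r) ≠ 0 := by
    have : ((1 + r : ℝ) : ℂ) ≠ 0 := by exact_mod_cast ne_of_gt hrpos
    push_cast at this
    exact this
  have hden_ne : 1 + (starRingEnd ℂ) a * w ^ k ≠ 0 := by
    rw [hden]; exact h1rc
  have h1 : HasDerivAt (fun z : ℂ => z ^ k + a) ((k : ℂ) * w ^ (k - 1)) w :=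
    (hasDerivAt_pow k w).add_const a
  have h2 : HasDerivAt (fun z : ℂ => 1 + (starRingEnd ℂ) a * z ^ k)
      ((starRingEnd ℂ) a * ((k : ℂ) * w ^ (k - 1))) w :=
    (((hasDerivAt_pow k w).const_mul ((starRingEnd ℂ) a)).const_add 1)
  have hD : deriv (fun z : ℂ => (z ^ k + a) / (1 + (starRingEnd ℂ) a * z ^ k)) w = _ :=
    (h1.div h2 hden_ne).deriv
  rw [hD]
  have hconj_sum : (w ^ k + a) * ((starRingEnd ℂ) a) = ((r + r^2 : ℝ) : ℂ) := by
    rw [hwk, add_mul, mul_comm w, haw, mul_comm a, hconj_a]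
    push_cast; ring
  have key : ((k : ℂ) * w ^ (k - 1) * (1 + (starRingEnd ℂ) a * w ^ k) -
      (w ^ k + a) * ((starRingEnd ℂ) a * ((k : ℂ) * w ^ (k - 1)))) /
      (1 + (starRingEnd ℂ) a * w ^ k) ^ 2
      = ((k * (1 - r) / (1 + r) : ℝ) : ℂ) := by
    rw [hden, hwk1]
    have heq : (w ^ k + a) * ((starRingEnd ℂ) a * ((k : ℂ) * 1)) =
        ((r + r^2 : ℝ) : ℂ) * ((k : ℂ) * 1) := by
      rw [← mul_assoc, hconj_sum]
    rw [heq]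
    push_cast
    field_simp [h1rc]
  rw [key]
  constructor
  · intro h
    have hre : k * (1 - r) / (1 + r) = 1 := by exact_mod_cast h
    have : k * (1 - r) = 1 + r := by
      field_simp at hre; linarith
    have hk1 : (0:ℝ) < (k:ℝ) + 1 := by positivity
    rw [hr] at *
    field_simp
    nlinarith
  · intro h
    have hk1 : ((k:ℝ) + 1) ≠ 0 := by positivity
    have : k * (1 - r) / (1 + r) = 1 := by
      rw [hr] at h
      have hrval : r = ((k:ℝ) - 1) / ((k:ℝ) + 1) := h
      rw [hrval]
      have hk2 : (2:ℝ) ≤ (k:ℝ) := by exact_mod_cast hk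
      field_simp
      rw [div_eq_iff (by linarith : (0:ℝ) < k + 1 + (k - 1)).ne']
      ring
    rw [this]
    norm_num
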